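/- Let ν be a probability vector on S × A with ν_min := min_{(s,a)} ν(s,a) > 0, and suppose π_{b,min} ≤ 1/2. Let π be a policy, π̃ another policy, ω ∈ [0,1], π' = (1-ω)π + ωπ̃, χ = ‖H Q − H_{π̃} Q‖∞, and W = (1/2)‖Q − Q^{π}‖_ν². Fix a sample y = (s₁,a₁,s₂,a₂) ∈ (S×A)², a stepsize α ≥ 0, and define the importance-sampling critic update Q' by Q'(s₁,a₁) = Q(s₁,a₁) + α (R(s₁,a₁) + γ (π'(a₂|s₂)/π_b(a₂|s₂)) Q(s₂,a₂) − Q(s₁,a₁)) and Q'(s,a) = Q(s,a) for (s,a) ≠ (s₁,a₁). Then (1/2)‖(Q' − Q) + (Q^{π} − Q^{π'})‖_ν² ≤ (9α²/(π_{b,min}² ν_min) + 24ω²/((1−γ)² ν_min)) W + (3ω²/(1−γ)²) ‖Q* − Q^{π}‖∞² + (3ω²/(1−γ)²) χ² + 8α²/((1−γ)² π_{b,min}²). -/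
import Mathlib


noncomputable section

/-- A policy assigns to each state a probability distribution over actions. -/
def IsPolicy {S A : Type*} [Fintype A] (π : S → A → ℝ) : Prop :=
  (∀ s a, 0 ≤ π s a) ∧ ∀ s, ∑ a, π s a = 1

/-- A transition kernel assigns to each state-action pair a probability distribution over states. -/
def IsKernel {S A : Type*} [Fintype S] (p : S → A → S → ℝ) : Prop :=
  (∀ s a s', 0 ≤ p s a s') ∧ ∀ s a, ∑ s', p s a s' = 1

/-- Sup norm on `S × A → ℝ` (functions `S → A → ℝ`). -/
def supNorm {S A : Type*} [Fintype S] [Fintype A] [Nonempty S] [Nonempty A]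
    (Q : S → A → ℝ) : ℝ :=
  Finset.univ.sup' Finset.univ_nonempty (fun sa : S × A => |Q sa.1 sa.2|)

/-- Total variation distance between two distributions on a finite set. -/
def dTV {Ω : Type*} [Fintype Ω] (p₁ p₂ : Ω → ℝ) : ℝ :=
  (∑ x, |p₁ x - p₂ x|) / 2

/-- Weighted ℓ₂ norm with weights ν. -/
def nuNorm {S A : Type*} [Fintype S] [Fintype A] (ν : S → A → ℝ) (Q : S → A → ℝ) : ℝ :=
  Real.sqrt (∑ s, ∑ a, ν s a * (Q s a) ^ 2)

/-- Weighted ℓ₂ inner product with weights ν. -/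
def nuInner {S A : Type*} [Fintype S] [Fintype A] (ν : S → A → ℝ) (Q₁ Q₂ : S → A → ℝ) : ℝ :=
  ∑ s, ∑ a, ν s a * Q₁ s a * Q₂ s a

/-- Bellman operator associated with a policy π. -/
def bellman {S A : Type*} [Fintype S] [Fintype A]
    (p : S → A → S → ℝ) (R : S → A → ℝ) (γ : ℝ) (π : S → A → ℝ)
    (Q : S → A → ℝ) : S → A → ℝ :=
  fun s a => R s a + γ * ∑ s', p s a s' * ∑ a', π s' a' * Q s' a'

/-- Bellman optimality operator. -/
def bellmanOpt {S A : Type*} [Fintype S] [Fintype A] [Nonempty A]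
    (p : S → A → S → ℝ) (R : S → A → ℝ) (γ : ℝ)
    (Q : S → A → ℝ) : S → A → ℝ :=
  fun s a => R s a + γ * ∑ s', p s a s' *
    Finset.univ.sup' Finset.univ_nonempty (fun a' => Q s' a')

/-- Expected operator F̄(Q,π) = (I − D)Q + D H_π Q, where D has diagonal entries μ_b(s)π_b(a|s). -/
def Fbar {S A : Type*} [Fintype S] [Fintype A]
    (p : S → A → S → ℝ) (R : S → A → ℝ) (γ : ℝ)
    (μb : S → ℝ) (πb : S → A → ℝ) (π : S → A → ℝ) (Q : S → A → ℝ) : S → A → ℝ :=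
  fun s a => (1 - μb s * πb s a) * Q s a + μb s * πb s a * bellman p R γ π Q s a

/-- Importance-sampling TD operator, for y = ((s₁,a₁),(s₂,a₂)). -/
def FIS {S A : Type*} [Fintype S] [Fintype A] [DecidableEq S] [DecidableEq A]
    (R : S → A → ℝ) (γ : ℝ) (πb : S → A → ℝ)
    (Q : S → A → ℝ) (y : (S × A) × S × A) (π : S → A → ℝ) : S → A → ℝ :=
  fun s a => if (s, a) = y.1 then
      R y.1.1 y.1.2 + γ * (π y.2.1 y.2.2 / πb y.2.1 y.2.2) * Q y.2.1 y.2.2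
    else Q s a

/-- Expected-TD operator, for u = (s₁,a₁,s₂). -/
def FETD {S A : Type*} [Fintype S] [Fintype A] [DecidableEq S] [DecidableEq A]
    (R : S → A → ℝ) (γ : ℝ)
    (Q : S → A → ℝ) (u : S × A × S) (π : S → A → ℝ) : S → A → ℝ :=
  fun s a => if (s, a) = (u.1, u.2.1) then
      R u.1 u.2.1 + γ * ∑ a', π u.2.2 a' * Q u.2.2 a'
    else Q s a

/-- State transition matrix induced by a policy. -/
def Pmat {S A : Type*} [Fintype A] (p : S → A → S → ℝ) (π : S → A → ℝ) : Matrix S S ℝ :=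
  Matrix.of fun s s' => ∑ a, π s a * p s a s'

end
open Finset

section Helpers
set_option linter.unusedSectionVars false
variable {S A : Type*} [Fintype S] [Fintype A] [Nonempty S] [Nonempty A]

lemma abs_le_supNorm (Q : S → A → ℝ) (s : S) (a : A) : |Q s a| ≤ supNorm Q :=
  Finset.le_sup' (fun sa : S × A => |Q sa.1 sa.2|) (Finset.mem_univ (s, a))

lemma supNorm_nonneg (Q : S → A → ℝ) : 0 ≤ supNorm Q := by
  obtain ⟨s⟩ := ‹Nonempty S›; obtain ⟨a⟩ := ‹Nonempty A›
  exact le_trans (abs_nonneg _) (abs_le_supNorm Q s a)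

lemma supNorm_le {Q : S → A → ℝ} {c : ℝ} (h : ∀ s a, |Q s a| ≤ c) : supNorm Q ≤ c :=
  Finset.sup'_le _ _ fun sa _ => h sa.1 sa.2

lemma weighted_le {ι : Type*} [Fintype ι] {w f : ι → ℝ} {M : ℝ}
    (hw : ∀ i, 0 ≤ w i) (hs : ∑ i, w i = 1) (hf : ∀ i, f i ≤ M) :
    ∑ i, w i * f i ≤ M := by
  calc ∑ i, w i * f i ≤ ∑ i, w i * M :=
        Finset.sum_le_sum fun i _ => mul_le_mul_of_nonneg_left (hf i) (hw i)
    _ = M := by rw [← Finset.sum_mul, hs, one_mul]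

lemma le_weighted {ι : Type*} [Fintype ι] {w f : ι → ℝ} {m : ℝ}
    (hw : ∀ i, 0 ≤ w i) (hs : ∑ i, w i = 1) (hf : ∀ i, m ≤ f i) :
    m ≤ ∑ i, w i * f i := by
  calc (m:ℝ) = ∑ i, w i * m := by rw [← Finset.sum_mul, hs, one_mul]
    _ ≤ ∑ i, w i * f i :=
        Finset.sum_le_sum fun i _ => mul_le_mul_of_nonneg_left (hf i) (hw i)

lemma abs_weighted_le {ι : Type*} [Fintype ι] {w f : ι → ℝ} {M : ℝ}
    (hw : ∀ i, 0 ≤ w i) (hs : ∑ i, w i = 1) (hf : ∀ i, |f i| ≤ M) :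
    |∑ i, w i * f i| ≤ M := by
  rw [abs_le]
  exact ⟨le_weighted hw hs fun i => (abs_le.mp (hf i)).1,
    weighted_le hw hs fun i => (abs_le.mp (hf i)).2⟩

/-- pointwise contraction for bellman -/
lemma bellman_contract {p : S → A → S → ℝ} (hp : IsKernel p)
    {π : S → A → ℝ} (hπ : IsPolicy π) (R : S → A → ℝ) {γ : ℝ} (hγ : 0 ≤ γ)
    (Q1 Q2 : S → A → ℝ) {M : ℝ} (hM : ∀ s a, |Q1 s a - Q2 s a| ≤ M) (s : S) (a : A) :
    |bellman p R γ π Q1 s a - bellman p R γ π Q2 s a| ≤ γ * M := by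
  have key : bellman p R γ π Q1 s a - bellman p R γ π Q2 s a
      = γ * ∑ s', p s a s' * ∑ a', π s' a' * (Q1 s' a' - Q2 s' a') := by
    simp only [bellman, Finset.mul_sum, mul_sub, Finset.sum_sub_distrib]
    ring
  rw [key, abs_mul, abs_of_nonneg hγ]
  apply mul_le_mul_of_nonneg_left _ hγ
  apply abs_weighted_le (fun s' => hp.1 s a s') (hp.2 s a)
  intro s'
  exact abs_weighted_le (fun a' => hπ.1 s' a') (hπ.2 s') (fun a' => hM s' a')

end Helpers
section H2
set_option linter.unusedSectionVars false
variable {S A : Type*} [Fintype S] [Fintype A] [Nonempty S] [Nonempty A]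

lemma sup'_diff_le {f g : A → ℝ} {M : ℝ} (h : ∀ a, |f a - g a| ≤ M) :
    |Finset.univ.sup' Finset.univ_nonempty f - Finset.univ.sup' Finset.univ_nonempty g| ≤ M := by
  rw [abs_le]
  constructor
  · rw [neg_le, neg_sub]
    apply sub_le_iff_le_add.mpr
    apply Finset.sup'_le
    intro a _
    have h1 := (abs_le.mp (h a)).1
    have h2 := Finset.le_sup' f (Finset.mem_univ a)
    linarith
  · apply sub_le_iff_le_add.mpr
    apply Finset.sup'_le
    intro a _
    have h1 := (abs_le.mp (h a)).2
    have h2 := Finset.le_sup' g (Finset.mem_univ a)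
    linarith

lemma bellmanOpt_contract {p : S → A → S → ℝ} (hp : IsKernel p)
    (R : S → A → ℝ) {γ : ℝ} (hγ : 0 ≤ γ)
    (Q1 Q2 : S → A → ℝ) {M : ℝ} (hM : ∀ s a, |Q1 s a - Q2 s a| ≤ M) (s : S) (a : A) :
    |bellmanOpt p R γ Q1 s a - bellmanOpt p R γ Q2 s a| ≤ γ * M := by
  have key : bellmanOpt p R γ Q1 s a - bellmanOpt p R γ Q2 s a
      = γ * ∑ s', p s a s' * (Finset.univ.sup' Finset.univ_nonempty (fun a' => Q1 s' a')
          - Finset.univ.sup' Finset.univ_nonempty (fun a' => Q2 s' a')) := by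
    simp only [bellmanOpt, Finset.mul_sum, mul_sub, Finset.sum_sub_distrib]
    ring
  rw [key, abs_mul, abs_of_nonneg hγ]
  apply mul_le_mul_of_nonneg_left _ hγ
  apply abs_weighted_le (fun s' => hp.1 s a s') (hp.2 s a)
  intro s'
  exact sup'_diff_le (fun a' => hM s' a')

lemma bellman_le_bellmanOpt {p : S → A → S → ℝ} (hp : IsKernel p)
    {π : S → A → ℝ} (hπ : IsPolicy π) (R : S → A → ℝ) {γ : ℝ} (hγ : 0 ≤ γ)
    (Q : S → A → ℝ) (s : S) (a : A) :
    bellman p R γ π Q s a ≤ bellmanOpt p R γ Q s a := by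
  unfold bellman bellmanOpt
  gcongr with s' _
  · exact hp.1 s a s'
  · exact weighted_le (fun a' => hπ.1 s' a') (hπ.2 s')
      (fun a' => Finset.le_sup' (fun a' => Q s' a') (Finset.mem_univ a'))

lemma bellmanOpt_mono {p : S → A → S → ℝ} (hp : IsKernel p)
    (R : S → A → ℝ) {γ : ℝ} (hγ : 0 ≤ γ)
    {Q1 Q2 : S → A → ℝ} (h : ∀ s a, Q1 s a ≤ Q2 s a) (s : S) (a : A) :
    bellmanOpt p R γ Q1 s a ≤ bellmanOpt p R γ Q2 s a := by
  unfold bellmanOpt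
  gcongr with s' _ a' _
  · exact hp.1 s a s'
  · exact h s' a' 

end H2
section H3
set_option linter.unusedSectionVars false
variable {S A : Type*} [Fintype S] [Fintype A] [Nonempty S] [Nonempty A]

lemma bellman_diff_eq {p : S → A → S → ℝ} (π : S → A → ℝ) (R : S → A → ℝ) (γ : ℝ)
    (Q1 Q2 : S → A → ℝ) (s : S) (a : A) :
    bellman p R γ π Q1 s a - bellman p R γ π Q2 s a
      = γ * ∑ s', p s a s' * ∑ a', π s' a' * (Q1 s' a' - Q2 s' a') := by
  simp only [bellman, Finset.mul_sum, mul_sub, Finset.sum_sub_distrib]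
  ring

lemma bellman_diff_le {p : S → A → S → ℝ} (hp : IsKernel p)
    {π : S → A → ℝ} (hπ : IsPolicy π) (R : S → A → ℝ) {γ : ℝ} (hγ : 0 ≤ γ)
    (Q1 Q2 : S → A → ℝ) {M : ℝ} (hM : ∀ s a, Q1 s a - Q2 s a ≤ M) (s : S) (a : A) :
    bellman p R γ π Q1 s a - bellman p R γ π Q2 s a ≤ γ * M := by
  rw [bellman_diff_eq]
  apply mul_le_mul_of_nonneg_left _ hγ
  apply weighted_le (fun s' => hp.1 s a s') (hp.2 s a)
  intro s'
  exact weighted_le (fun a' => hπ.1 s' a') (hπ.2 s') (fun a' => hM s' a')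

lemma Qpi_nonneg {p : S → A → S → ℝ} (hp : IsKernel p)
    {π : S → A → ℝ} (hπ : IsPolicy π) {R : S → A → ℝ} (hR : ∀ s a, 0 ≤ R s a ∧ R s a ≤ 1)
    {γ : ℝ} (hγ : 0 < γ ∧ γ < 1) {Qpi : S → A → ℝ}
    (hQpi : bellman p R γ π Qpi = Qpi) (s : S) (a : A) : 0 ≤ Qpi s a := by
  obtain ⟨sa, -, hsa⟩ := Finset.exists_mem_eq_inf' (Finset.univ_nonempty (α := S × A))
    (fun sa : S × A => Qpi sa.1 sa.2)
  have hm : ∀ s a, Finset.univ.inf' Finset.univ_nonempty (fun sa : S × A => Qpi sa.1 sa.2)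
      ≤ Qpi s a := fun s a => Finset.inf'_le _ (Finset.mem_univ (s, a))
  set m := Finset.univ.inf' Finset.univ_nonempty (fun sa : S × A => Qpi sa.1 sa.2) with hmdef
  have h1 : γ * m ≤ m := by
    conv_rhs => rw [hsa, ← hQpi]
    unfold bellman
    have : γ * m ≤ γ * ∑ s', p sa.1 sa.2 s' * ∑ a', π s' a' * Qpi s' a' := by
      apply mul_le_mul_of_nonneg_left _ (le_of_lt hγ.1)
      apply le_weighted (fun s' => hp.1 sa.1 sa.2 s') (hp.2 sa.1 sa.2)
      intro s'
      exact le_weighted (fun a' => hπ.1 s' a') (hπ.2 s') (fun a' => hm s' a')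
    have := (hR sa.1 sa.2).1
    linarith
  have hm0 : 0 ≤ m := by nlinarith [hγ.2]
  exact le_trans hm0 (hm s a)

lemma Qpi_le_bound {p : S → A → S → ℝ} (hp : IsKernel p)
    {π : S → A → ℝ} (hπ : IsPolicy π) {R : S → A → ℝ} (hR : ∀ s a, 0 ≤ R s a ∧ R s a ≤ 1)
    {γ : ℝ} (hγ : 0 < γ ∧ γ < 1) {Qpi : S → A → ℝ}
    (hQpi : bellman p R γ π Qpi = Qpi) (s : S) (a : A) : Qpi s a ≤ 1 / (1 - γ) := by
  obtain ⟨sa, -, hsa⟩ := Finset.exists_mem_eq_sup' (Finset.univ_nonempty (α := S × A))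
    (fun sa : S × A => Qpi sa.1 sa.2)
  have hm : ∀ s a, Qpi s a
      ≤ Finset.univ.sup' Finset.univ_nonempty (fun sa : S × A => Qpi sa.1 sa.2) :=
    fun s a => Finset.le_sup' (fun sa : S × A => Qpi sa.1 sa.2) (Finset.mem_univ (s, a))
  set m := Finset.univ.sup' Finset.univ_nonempty (fun sa : S × A => Qpi sa.1 sa.2) with hmdef
  have h1 : m ≤ 1 + γ * m := by
    conv_lhs => rw [hsa, ← hQpi]
    unfold bellman
    have h2 : γ * ∑ s', p sa.1 sa.2 s' * ∑ a', π s' a' * Qpi s' a' ≤ γ * m := by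
      apply mul_le_mul_of_nonneg_left _ (le_of_lt hγ.1)
      apply weighted_le (fun s' => hp.1 sa.1 sa.2 s') (hp.2 sa.1 sa.2)
      intro s'
      exact weighted_le (fun a' => hπ.1 s' a') (hπ.2 s') (fun a' => hm s' a')
    have := (hR sa.1 sa.2).2
    linarith
  have hg : 0 < 1 - γ := by linarith [hγ.2]
  have hmb : m ≤ 1 / (1 - γ) := by
    rw [le_div_iff₀ hg]; nlinarith
  exact le_trans (hm s a) hmb

lemma Qpi_le_Qstar {p : S → A → S → ℝ} (hp : IsKernel p)
    {π : S → A → ℝ} (hπ : IsPolicy π) (R : S → A → ℝ)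
    {γ : ℝ} (hγ : 0 < γ ∧ γ < 1) {Qpi Qstar : S → A → ℝ}
    (hQpi : bellman p R γ π Qpi = Qpi)
    (hQstar : bellmanOpt p R γ Qstar = Qstar) (s : S) (a : A) : Qpi s a ≤ Qstar s a := by
  obtain ⟨sa, -, hsa⟩ := Finset.exists_mem_eq_sup' (Finset.univ_nonempty (α := S × A))
    (fun sa : S × A => Qpi sa.1 sa.2 - Qstar sa.1 sa.2)
  have hm : ∀ s a, Qpi s a - Qstar s a
      ≤ Finset.univ.sup' Finset.univ_nonempty
        (fun sa : S × A => Qpi sa.1 sa.2 - Qstar sa.1 sa.2) :=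
    fun s a => Finset.le_sup' (fun sa : S × A => Qpi sa.1 sa.2 - Qstar sa.1 sa.2)
      (Finset.mem_univ (s, a))
  set m := Finset.univ.sup' Finset.univ_nonempty
    (fun sa : S × A => Qpi sa.1 sa.2 - Qstar sa.1 sa.2) with hmdef
  have h1 : m ≤ γ * m := by
    conv_lhs => rw [hsa]
    calc Qpi sa.1 sa.2 - Qstar sa.1 sa.2
        = bellman p R γ π Qpi sa.1 sa.2 - bellmanOpt p R γ Qstar sa.1 sa.2 := by
          rw [hQpi, hQstar]
      _ ≤ bellman p R γ π Qpi sa.1 sa.2 - bellman p R γ π Qstar sa.1 sa.2 := by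
          have := bellman_le_bellmanOpt hp hπ R (le_of_lt hγ.1) Qstar sa.1 sa.2
          linarith
      _ ≤ γ * m := bellman_diff_le hp hπ R (le_of_lt hγ.1) Qpi Qstar hm sa.1 sa.2
  have hm0 : m ≤ 0 := by nlinarith [hγ.2]
  have := hm s a
  linarith

end H3
section H4
set_option linter.unusedSectionVars false
variable {S A : Type*} [Fintype S] [Fintype A] [Nonempty S] [Nonempty A]

lemma bellman_policy_diff {p : S → A → S → ℝ} (π1 π2 : S → A → ℝ) (R : S → A → ℝ) (γ : ℝ)
    (Q : S → A → ℝ) (s : S) (a : A) :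
    bellman p R γ π1 Q s a - bellman p R γ π2 Q s a
      = γ * ∑ s', p s a s' * ∑ a', (π1 s' a' - π2 s' a') * Q s' a' := by
  simp only [bellman, sub_mul, Finset.mul_sum, mul_sub, Finset.sum_sub_distrib]
  ring

lemma ydiff_bound {p : S → A → S → ℝ} (hp : IsKernel p)
    {R : S → A → ℝ} (hR : ∀ s a, 0 ≤ R s a ∧ R s a ≤ 1)
    {γ : ℝ} (hγ : 0 < γ ∧ γ < 1)
    {π πt π' : S → A → ℝ} (hπ : IsPolicy π) (hπt : IsPolicy πt)
    {ω : ℝ} (hω : 0 ≤ ω ∧ ω ≤ 1)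
    (hπ' : ∀ s a, π' s a = (1 - ω) * π s a + ω * πt s a)
    {Q Qstar Qpi Qpi' : S → A → ℝ}
    (hQstar : bellmanOpt p R γ Qstar = Qstar)
    (hQpi : bellman p R γ π Qpi = Qpi)
    (hQpi' : bellman p R γ π' Qpi' = Qpi') :
    (1 - γ) * supNorm (fun s a => Qpi s a - Qpi' s a)
      ≤ ω * (2 * γ * supNorm (fun s a => Q s a - Qpi s a)
          + supNorm (fun s a => bellmanOpt p R γ Q s a - bellman p R γ πt Q s a)
          + supNorm (fun s a => Qstar s a - Qpi s a)) := by
  have hγ0 : (0:ℝ) ≤ γ := le_of_lt hγ.1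
  have hπ'pol : IsPolicy π' := by
    constructor
    · intro s a
      rw [hπ']
      have := hπ.1 s a; have := hπt.1 s a
      nlinarith [hω.1, hω.2]
    · intro s
      simp only [hπ']
      rw [Finset.sum_add_distrib, ← Finset.mul_sum, ← Finset.mul_sum, hπ.2 s, hπt.2 s]
      ring
  set M := supNorm (fun s a => Q s a - Qpi s a) with hM
  set χ := supNorm (fun s a => bellmanOpt p R γ Q s a - bellman p R γ πt Q s a) with hχ
  set E := supNorm (fun s a => Qstar s a - Qpi s a) with hE
  set Y := supNorm (fun s a => Qpi s a - Qpi' s a) with hY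
  -- step C : pointwise |H_πt Qpi - H_π Qpi| ≤ 2γM + χ + E
  have stepC : ∀ s a, |bellman p R γ πt Qpi s a - bellman p R γ π Qpi s a|
      ≤ 2 * γ * M + χ + E := by
    intro s a
    have t1 : |bellman p R γ πt Qpi s a - bellman p R γ πt Q s a| ≤ γ * M := by
      apply bellman_contract hp hπt R hγ0
      intro s' a'
      rw [abs_sub_comm]
      exact abs_le_supNorm (fun s a => Q s a - Qpi s a) s' a'
    have t2 : |bellman p R γ πt Q s a - bellmanOpt p R γ Q s a| ≤ χ := by
      rw [abs_sub_comm]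
      exact abs_le_supNorm (fun s a => bellmanOpt p R γ Q s a - bellman p R γ πt Q s a) s a
    have t3 : |bellmanOpt p R γ Q s a - bellmanOpt p R γ Qpi s a| ≤ γ * M := by
      apply bellmanOpt_contract hp R hγ0
      intro s' a'
      exact abs_le_supNorm (fun s a => Q s a - Qpi s a) s' a'
    have t4 : |bellmanOpt p R γ Qpi s a - bellman p R γ π Qpi s a| ≤ E := by
      have low : bellman p R γ π Qpi s a ≤ bellmanOpt p R γ Qpi s a :=
        bellman_le_bellmanOpt hp hπ R hγ0 Qpi s a
      have up : bellmanOpt p R γ Qpi s a ≤ Qstar s a := by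
        calc bellmanOpt p R γ Qpi s a ≤ bellmanOpt p R γ Qstar s a :=
              bellmanOpt_mono hp R hγ0 (Qpi_le_Qstar hp hπ R hγ hQpi hQstar) s a
          _ = Qstar s a := by rw [hQstar]
      have hEp : Qstar s a - Qpi s a ≤ E :=
        le_trans (le_abs_self _) (abs_le_supNorm (fun s a => Qstar s a - Qpi s a) s a)
      rw [abs_le]
      constructor
      · have hE0 : 0 ≤ E := supNorm_nonneg _
        linarith
      · have : bellman p R γ π Qpi s a = Qpi s a := by rw [hQpi]
        linarith
    calc |bellman p R γ πt Qpi s a - bellman p R γ π Qpi s a|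
        ≤ |bellman p R γ πt Qpi s a - bellman p R γ πt Q s a|
          + |bellman p R γ πt Q s a - bellmanOpt p R γ Q s a|
          + |bellmanOpt p R γ Q s a - bellmanOpt p R γ Qpi s a|
          + |bellmanOpt p R γ Qpi s a - bellman p R γ π Qpi s a| := by
          have := abs_sub_le (bellman p R γ πt Qpi s a) (bellman p R γ πt Q s a)
            (bellman p R γ π Qpi s a)
          have h2 := abs_sub_le (bellman p R γ πt Q s a) (bellmanOpt p R γ Q s a)
            (bellman p R γ π Qpi s a)
          have h3 := abs_sub_le (bellmanOpt p R γ Q s a) (bellmanOpt p R γ Qpi s a)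
            (bellman p R γ π Qpi s a)
          linarith
      _ ≤ γ * M + χ + γ * M + E := by linarith
      _ = 2 * γ * M + χ + E := by ring
  -- step B : H_π' Qpi - H_π Qpi = ω (H_πt Qpi - H_π Qpi)
  have stepB : ∀ s a, bellman p R γ π' Qpi s a - bellman p R γ π Qpi s a
      = ω * (bellman p R γ πt Qpi s a - bellman p R γ π Qpi s a) := by
    intro s a
    rw [bellman_policy_diff, bellman_policy_diff]
    rw [show ω * (γ * ∑ s', p s a s' * ∑ a', (πt s' a' - π s' a') * Qpi s' a')
        = γ * ∑ s', p s a s' * (ω * ∑ a', (πt s' a' - π s' a') * Qpi s' a') by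
      rw [Finset.mul_sum, Finset.mul_sum, Finset.mul_sum]
      apply Finset.sum_congr rfl
      intro s' _
      ring]
    congr 1
    apply Finset.sum_congr rfl
    intro s' _
    congr 1
    rw [Finset.mul_sum]
    apply Finset.sum_congr rfl
    intro a' _
    rw [hπ']
    ring
  -- step A
  have stepA : Y ≤ ω * (2 * γ * M + χ + E) + γ * Y := by
    apply supNorm_le
    intro s a
    have key : Qpi s a - Qpi' s a
        = (bellman p R γ π Qpi s a - bellman p R γ π' Qpi s a)
          + (bellman p R γ π' Qpi s a - bellman p R γ π' Qpi' s a) := by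
      rw [hQpi, hQpi']; ring
    rw [key]
    have h1 : |bellman p R γ π Qpi s a - bellman p R γ π' Qpi s a|
        ≤ ω * (2 * γ * M + χ + E) := by
      rw [abs_sub_comm, stepB, abs_mul, abs_of_nonneg hω.1]
      exact mul_le_mul_of_nonneg_left (stepC s a) hω.1
    have h2 : |bellman p R γ π' Qpi s a - bellman p R γ π' Qpi' s a| ≤ γ * Y := by
      apply bellman_contract hp hπ'pol R hγ0
      intro s' a'
      exact abs_le_supNorm (fun s a => Qpi s a - Qpi' s a) s' a'
    calc |_ + _| ≤ _ := abs_add_le _ _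
      _ ≤ ω * (2 * γ * M + χ + E) + γ * Y := by linarith
  linarith

end H4
section H5
set_option linter.unusedSectionVars false
variable {S A : Type*} [Fintype S] [Fintype A] [Nonempty S] [Nonempty A]

lemma nuNorm_sq {ν : S → A → ℝ} (hν : ∀ s a, 0 ≤ ν s a) (f : S → A → ℝ) :
    nuNorm ν f ^ 2 = ∑ s, ∑ a, ν s a * f s a ^ 2 := by
  unfold nuNorm
  rw [Real.sq_sqrt]
  exact Finset.sum_nonneg fun s _ => Finset.sum_nonneg fun a _ =>
    mul_nonneg (hν s a) (sq_nonneg _)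

lemma point_le_sum {ν : S → A → ℝ} (hν : ∀ s a, 0 ≤ ν s a) (f : S → A → ℝ) (s : S) (a : A) :
    ν s a * f s a ^ 2 ≤ ∑ s', ∑ a', ν s' a' * f s' a' ^ 2 := by
  have h1 : ν s a * f s a ^ 2 ≤ ∑ a', ν s a' * f s a' ^ 2 :=
    Finset.single_le_sum (f := fun a' => ν s a' * f s a' ^ 2)
      (fun a' _ => mul_nonneg (hν s a') (sq_nonneg _)) (Finset.mem_univ a)
  have h2 : ∑ a', ν s a' * f s a' ^ 2 ≤ ∑ s', ∑ a', ν s' a' * f s' a' ^ 2 :=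
    Finset.single_le_sum (f := fun s' => ∑ a', ν s' a' * f s' a' ^ 2)
      (fun s' _ => Finset.sum_nonneg fun a' _ => mul_nonneg (hν s' a') (sq_nonneg _))
      (Finset.mem_univ s)
  linarith

lemma nuNorm_nonneg (ν f : S → A → ℝ) : 0 ≤ nuNorm ν f := Real.sqrt_nonneg _

end H5
section H6

lemma add_sq_le_two (a b : ℝ) : (a + b) ^ 2 ≤ 2 * a ^ 2 + 2 * b ^ 2 := by
  nlinarith [sq_nonneg (a - b)]

lemma three_sq_le (a b c : ℝ) : (a + b + c) ^ 2 ≤ 3 * (a ^ 2 + b ^ 2 + c ^ 2) := by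
  nlinarith [sq_nonneg (a - b), sq_nonneg (a - c), sq_nonneg (b - c)]

lemma ysq_bound {g Y c : ℝ} (hg : 0 < g) (hY : 0 ≤ Y) (h : g * Y ≤ c) :
    Y ^ 2 ≤ c ^ 2 / g ^ 2 := by
  rw [le_div_iff₀ (by positivity)]
  nlinarith [mul_le_mul h h (mul_nonneg hg.le hY) (le_trans (mul_nonneg hg.le hY) h)]

lemma aT_sq_bound {γ P r q1 q2 ρ : ℝ} (hγ0 : 0 < γ) (hγ1 : γ < 1)
    (hP0 : 0 < P) (hP : P ≤ 1 / 2)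
    (hr0 : 0 ≤ r) (hr1 : r ≤ 1) (hρ0 : 0 ≤ ρ) (hρ : ρ * P ≤ 1)
    (hq10 : 0 ≤ q1) (hq11 : q1 * (1 - γ) ≤ 1) (hq20 : 0 ≤ q2) (hq21 : q2 * (1 - γ) ≤ 1) :
    (r + γ * ρ * q2 - q1) ^ 2 ≤ 4 / ((1 - γ) ^ 2 * P ^ 2) := by
  have hg : (0:ℝ) < 1 - γ := by linarith
  rw [le_div_iff₀ (by positivity)]
  have key : ((r + γ * ρ * q2 - q1) * ((1 - γ) * P)) ^ 2 ≤ 4 := by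
    have hgP : (1 - γ) * P ≤ 1 / 2 := by nlinarith [mul_nonneg hγ0.le hP0.le]
    have hgP0 : 0 ≤ (1 - γ) * P := by positivity
    have h1 : r * ((1 - γ) * P) ≤ 1 / 2 := by
      have := mul_le_mul hr1 hgP hgP0 zero_le_one
      linarith
    have h2 : 0 ≤ r * ((1 - γ) * P) := by positivity
    have h3 : γ * ρ * q2 * ((1 - γ) * P) ≤ 1 := by
      have hb : (ρ * P) * (q2 * (1 - γ)) ≤ 1 := by
        have := mul_le_mul hρ hq21 (mul_nonneg hq20 hg.le)
          (le_trans (mul_nonneg hρ0 hP0.le) hρ)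
        linarith
      have hb0 : 0 ≤ (ρ * P) * (q2 * (1 - γ)) :=
        mul_nonneg (mul_nonneg hρ0 hP0.le) (mul_nonneg hq20 hg.le)
      have heq : γ * ρ * q2 * ((1 - γ) * P) = γ * ((ρ * P) * (q2 * (1 - γ))) := by ring
      rw [heq]
      nlinarith [hb, hb0]
    have h4 : 0 ≤ γ * ρ * q2 * ((1 - γ) * P) := by positivity
    have h5 : q1 * ((1 - γ) * P) ≤ 1 / 2 := by nlinarith
    have h6 : 0 ≤ q1 * ((1 - γ) * P) := by positivity
    nlinarith [h1, h2, h3, h4, h5, h6]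
  nlinarith [key]

lemma bT_sq_bound {γ ρ P e1 e2 X : ℝ} (hγ0 : 0 ≤ γ) (hγ1 : γ ≤ 1)
    (hρ0 : 0 ≤ ρ) (hρ : ρ * P ≤ 1) (hP0 : 0 < P) (hP : P ≤ 1 / 2)
    (hX : 0 ≤ X) (he1 : e1 ^ 2 ≤ X) (he2 : e2 ^ 2 ≤ X) :
    (γ * ρ * e2 - e1) ^ 2 ≤ (9 / 4) * (X / P ^ 2) := by
  have hP2 : (0:ℝ) < P ^ 2 := by positivity
  rw [show (9:ℝ) / 4 * (X / P ^ 2) = 9 / 4 * X / P ^ 2 by ring, le_div_iff₀ hP2]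
  have hu : (γ * ρ * e2) ^ 2 * P ^ 2 ≤ X := by
    have h1 : (γ * ρ * e2) ^ 2 * P ^ 2 = γ ^ 2 * (ρ * P) ^ 2 * e2 ^ 2 := by ring
    rw [h1]
    have a1 : γ ^ 2 ≤ 1 := by nlinarith
    have a2 : (ρ * P) ^ 2 ≤ 1 := by nlinarith [mul_nonneg hρ0 hP0.le]
    have h2 : γ ^ 2 * (ρ * P) ^ 2 ≤ 1 := by nlinarith [sq_nonneg γ, sq_nonneg (ρ * P)]
    nlinarith [sq_nonneg e2, sq_nonneg (γ * (ρ * P))]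
  have hP4 : P ^ 2 ≤ 1 / 4 := by nlinarith
  nlinarith [sq_nonneg ((γ * ρ * e2 + 2 * e1) * P), sq_nonneg (γ * ρ * e2 * P), sq_nonneg e1, sq_nonneg P]

end H6
set_option maxHeartbeats 2000000 in

/-- Bound on the residual term T₄ for the IS-based critic update (Lemma A.5 / lem:residual). -/
theorem residual_bound_IS {S A : Type*} [Fintype S] [Fintype A] [Nonempty S] [Nonempty A]
    (p : S → A → S → ℝ) (hp : IsKernel p)
    (R : S → A → ℝ) (hR : ∀ s a, 0 ≤ R s a ∧ R s a ≤ 1)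
    (γ : ℝ) (hγ : 0 < γ ∧ γ < 1)
    (πb : S → A → ℝ) (hπb : IsPolicy πb) (hπbpos : ∀ s a, 0 < πb s a)
    (πbmin : ℝ)
    (hπbmin : πbmin = Finset.univ.inf' Finset.univ_nonempty (fun sa : S × A => πb sa.1 sa.2))
    (hπbhalf : πbmin ≤ 1 / 2)
    (ν : S → A → ℝ) (hνpos : ∀ s a, 0 < ν s a) (hνsum : ∑ s, ∑ a, ν s a = 1)
    (νmin : ℝ)
    (hνmin : νmin = Finset.univ.inf' Finset.univ_nonempty (fun sa : S × A => ν sa.1 sa.2))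
    (π πt π' : S → A → ℝ) (hπ : IsPolicy π) (hπt : IsPolicy πt)
    (ω : ℝ) (hω : 0 ≤ ω ∧ ω ≤ 1)
    (hπ' : ∀ s a, π' s a = (1 - ω) * π s a + ω * πt s a)
    (Q Qstar Qpi Qpi' : S → A → ℝ)
    (hQstar : bellmanOpt p R γ Qstar = Qstar)
    (hQpi : bellman p R γ π Qpi = Qpi)
    (hQpi' : bellman p R γ π' Qpi' = Qpi')
    (χ : ℝ)
    (hχ : χ = supNorm (fun s a => bellmanOpt p R γ Q s a - bellman p R γ πt Q s a))
    (W : ℝ)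
    (hW : W = (1 / 2) * nuNorm ν (fun s a => Q s a - Qpi s a) ^ 2)
    (s₁ : S) (a₁ : A) (s₂ : S) (a₂ : A)
    (α : ℝ) (hα : 0 ≤ α)
    (Q' : S → A → ℝ)
    (hQ'upd : Q' s₁ a₁
      = Q s₁ a₁ + α * (R s₁ a₁ + γ * (π' s₂ a₂ / πb s₂ a₂) * Q s₂ a₂ - Q s₁ a₁))
    (hQ'rest : ∀ s a, (s, a) ≠ (s₁, a₁) → Q' s a = Q s a) :
    (1 / 2) * nuNorm ν (fun s a => (Q' s a - Q s a) + (Qpi s a - Qpi' s a)) ^ 2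
      ≤ (9 * α ^ 2 / (πbmin ^ 2 * νmin) + 24 * ω ^ 2 / ((1 - γ) ^ 2 * νmin)) * W
        + (3 * ω ^ 2 / (1 - γ) ^ 2) * supNorm (fun s a => Qstar s a - Qpi s a) ^ 2
        + (3 * ω ^ 2 / (1 - γ) ^ 2) * χ ^ 2
        + 8 * α ^ 2 / ((1 - γ) ^ 2 * πbmin ^ 2) := by

  classical
  obtain ⟨hγ0, hγ1⟩ := hγ
  have hg : (0:ℝ) < 1 - γ := by linarith
  -- positivity of πbmin, νmin and pointwise bounds
  have hπbge : ∀ s a, πbmin ≤ πb s a := by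
    intro s a
    rw [hπbmin]
    exact Finset.inf'_le (fun sa : S × A => πb sa.1 sa.2) (Finset.mem_univ (s, a))
  have hP0 : 0 < πbmin := by
    obtain ⟨sa, -, hsa⟩ := Finset.exists_mem_eq_inf' (Finset.univ_nonempty (α := S × A))
      (fun sa : S × A => πb sa.1 sa.2)
    rw [hπbmin, hsa]
    exact hπbpos sa.1 sa.2
  have hνge : ∀ s a, νmin ≤ ν s a := by
    intro s a
    rw [hνmin]
    exact Finset.inf'_le (fun sa : S × A => ν sa.1 sa.2) (Finset.mem_univ (s, a))
  have hν0 : 0 < νmin := by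
    obtain ⟨sa, -, hsa⟩ := Finset.exists_mem_eq_inf' (Finset.univ_nonempty (α := S × A))
      (fun sa : S × A => ν sa.1 sa.2)
    rw [hνmin, hsa]
    exact hνpos sa.1 sa.2
  have hνn : ∀ s a, (0:ℝ) ≤ ν s a := fun s a => le_of_lt (hνpos s a)
  have hν11 : ν s₁ a₁ ≤ 1 := by
    rw [← hνsum]
    have h1 : ν s₁ a₁ ≤ ∑ a, ν s₁ a :=
      Finset.single_le_sum (f := fun a => ν s₁ a) (fun a _ => hνn s₁ a) (Finset.mem_univ a₁)
    have h2 : ∑ a, ν s₁ a ≤ ∑ s, ∑ a, ν s a :=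
      Finset.single_le_sum (f := fun s => ∑ a, ν s a)
        (fun s _ => Finset.sum_nonneg fun a _ => hνn s a) (Finset.mem_univ s₁)
    linarith
  have hπ'pol : IsPolicy π' := by
    constructor
    · intro s a
      rw [hπ']
      have h1 : 0 ≤ (1 - ω) * π s a := mul_nonneg (by linarith [hω.2]) (hπ.1 s a)
      have h2 : 0 ≤ ω * πt s a := mul_nonneg hω.1 (hπt.1 s a)
      linarith
    · intro s
      simp only [hπ']
      rw [Finset.sum_add_distrib, ← Finset.mul_sum, ← Finset.mul_sum, hπ.2 s, hπt.2 s]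
      ring
  -- basic quantities
  obtain ⟨M, hMdef⟩ : ∃ x, x = supNorm (fun s a => Q s a - Qpi s a) := ⟨_, rfl⟩
  obtain ⟨E, hEdef⟩ : ∃ x, x = supNorm (fun s a => Qstar s a - Qpi s a) := ⟨_, rfl⟩
  obtain ⟨Y, hYdef⟩ : ∃ x, x = supNorm (fun s a => Qpi s a - Qpi' s a) := ⟨_, rfl⟩
  rw [← hEdef]
  have hM0 : 0 ≤ M := hMdef ▸ supNorm_nonneg _
  have hE0 : 0 ≤ E := hEdef ▸ supNorm_nonneg _
  have hY0 : 0 ≤ Y := hYdef ▸ supNorm_nonneg _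
  have hχ0 : 0 ≤ χ := hχ ▸ supNorm_nonneg _
  have hW2 : ∑ s, ∑ a, ν s a * (Q s a - Qpi s a) ^ 2 = 2 * W := by
    rw [hW, nuNorm_sq hνn]; ring
  have hW0 : 0 ≤ W := by
    have : (0:ℝ) ≤ ∑ s, ∑ a, ν s a * (Q s a - Qpi s a) ^ 2 :=
      Finset.sum_nonneg fun s _ => Finset.sum_nonneg fun a _ =>
        mul_nonneg (hνn s a) (sq_nonneg _)
    linarith
  -- pointwise (Q-Qpi)² ≤ 2W/νmin
  have hpt : ∀ s a, (Q s a - Qpi s a) ^ 2 ≤ 2 * W / νmin := by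
    intro s a
    rw [le_div_iff₀ hν0]
    have h1 := point_le_sum hνn (fun s a => Q s a - Qpi s a) s a
    have h2 : νmin * (Q s a - Qpi s a) ^ 2 ≤ ν s a * (Q s a - Qpi s a) ^ 2 :=
      mul_le_mul_of_nonneg_right (hνge s a) (sq_nonneg _)
    rw [hW2] at h1
    linarith
  have hM2 : M ^ 2 ≤ 2 * W / νmin := by
    obtain ⟨sa, -, hsa⟩ := Finset.exists_mem_eq_sup' (Finset.univ_nonempty (α := S × A))
      (fun sa : S × A => |Q sa.1 sa.2 - Qpi sa.1 sa.2|)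
    have : M = |Q sa.1 sa.2 - Qpi sa.1 sa.2| := hMdef.trans hsa
    rw [this, sq_abs]
    exact hpt sa.1 sa.2

  -- the delta term
  obtain ⟨ρ, hρdef⟩ : ∃ x, x = π' s₂ a₂ / πb s₂ a₂ := ⟨_, rfl⟩
  obtain ⟨δ, hδdef⟩ : ∃ x, x = R s₁ a₁ + γ * ρ * Q s₂ a₂ - Q s₁ a₁ := ⟨_, rfl⟩
  have hπ'le1 : π' s₂ a₂ ≤ 1 := by
    rw [← hπ'pol.2 s₂]
    exact Finset.single_le_sum (f := fun a => π' s₂ a) (fun a _ => hπ'pol.1 s₂ a)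
      (Finset.mem_univ a₂)
  have hρ0 : 0 ≤ ρ := hρdef ▸ div_nonneg (hπ'pol.1 s₂ a₂) (le_of_lt (hπbpos s₂ a₂))
  have hρP : ρ * πbmin ≤ 1 := by
    rw [hρdef, div_mul_eq_mul_div, div_le_one (hπbpos s₂ a₂)]
    have := mul_le_mul hπ'le1 (hπbge s₂ a₂) hP0.le zero_le_one
    linarith
  -- T1 : the x part
  have hxval : Q' s₁ a₁ - Q s₁ a₁ = α * δ := by rw [hQ'upd, hδdef, hρdef]; ring
  have hT1sum : ∑ s, ∑ a, ν s a * (Q' s a - Q s a) ^ 2 = ν s₁ a₁ * (α * δ) ^ 2 := by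
    rw [Finset.sum_eq_single s₁]
    · rw [Finset.sum_eq_single a₁]
      · rw [hxval]
      · intro a _ ha
        rw [hQ'rest s₁ a (by simp [ha])]
        simp
      · intro h; exact absurd (Finset.mem_univ a₁) h
    · intro s _ hs
      apply Finset.sum_eq_zero
      intro a _
      rw [hQ'rest s a (by simp [hs])]
      simp
    · intro h; exact absurd (Finset.mem_univ s₁) h
  -- decompose δ = aT + bT
  obtain ⟨aT, haTdef⟩ : ∃ x, x = R s₁ a₁ + γ * ρ * Qpi s₂ a₂ - Qpi s₁ a₁ := ⟨_, rfl⟩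
  obtain ⟨bT, hbTdef⟩ : ∃ x, x = γ * ρ * (Q s₂ a₂ - Qpi s₂ a₂) - (Q s₁ a₁ - Qpi s₁ a₁) :=
    ⟨_, rfl⟩
  have hδab : δ = aT + bT := by rw [hδdef, haTdef, hbTdef]; ring
  have hQpiub : ∀ s a, Qpi s a ≤ 1 / (1 - γ) := fun s a =>
    Qpi_le_bound hp hπ hR ⟨hγ0, hγ1⟩ hQpi s a
  have hQpilb : ∀ s a, 0 ≤ Qpi s a := fun s a => Qpi_nonneg hp hπ hR ⟨hγ0, hγ1⟩ hQpi s a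
  have hQpig : ∀ s a, Qpi s a * (1 - γ) ≤ 1 := by
    intro s a
    have := hQpiub s a
    rw [le_div_iff₀ hg] at this
    linarith
  have haT : aT ^ 2 ≤ 4 / ((1 - γ) ^ 2 * πbmin ^ 2) := haTdef ▸
    aT_sq_bound hγ0 hγ1 hP0 hπbhalf (hR s₁ a₁).1 (hR s₁ a₁).2 hρ0 hρP
      (hQpilb s₁ a₁) (hQpig s₁ a₁) (hQpilb s₂ a₂) (hQpig s₂ a₂)
  have hXnn : (0:ℝ) ≤ 2 * W / νmin := div_nonneg (by linarith) hν0.le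
  have hbT : bT ^ 2 ≤ 9 / 4 * (2 * W / νmin / πbmin ^ 2) := hbTdef ▸
    bT_sq_bound hγ0.le hγ1.le hρ0 hρP hP0 hπbhalf hXnn
      (hpt s₁ a₁) (hpt s₂ a₂)
  have hδsq : δ ^ 2 ≤ 2 * (4 / ((1 - γ) ^ 2 * πbmin ^ 2))
      + 2 * (9 / 4 * (2 * W / νmin / πbmin ^ 2)) := by
    rw [hδab]
    have h2 := add_sq_le_two aT bT
    linarith
  have hgne : (1 - γ) ≠ 0 := ne_of_gt hg
  have hPne : πbmin ≠ 0 := ne_of_gt hP0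
  have hνne : νmin ≠ 0 := ne_of_gt hν0
  have hT1 : ν s₁ a₁ * (α * δ) ^ 2
      ≤ 9 * α ^ 2 / (πbmin ^ 2 * νmin) * W + 8 * α ^ 2 / ((1 - γ) ^ 2 * πbmin ^ 2) := by
    have h1 : ν s₁ a₁ * (α * δ) ^ 2 ≤ (α * δ) ^ 2 :=
      mul_le_of_le_one_left (sq_nonneg _) hν11
    have h2 : (α * δ) ^ 2 = α ^ 2 * δ ^ 2 := by ring
    have h3 : α ^ 2 * δ ^ 2 ≤ α ^ 2 * (2 * (4 / ((1 - γ) ^ 2 * πbmin ^ 2))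
        + 2 * (9 / 4 * (2 * W / νmin / πbmin ^ 2))) :=
      mul_le_mul_of_nonneg_left hδsq (sq_nonneg α)
    have h4 : α ^ 2 * (2 * (4 / ((1 - γ) ^ 2 * πbmin ^ 2))
        + 2 * (9 / 4 * (2 * W / νmin / πbmin ^ 2)))
        = 9 * α ^ 2 / (πbmin ^ 2 * νmin) * W + 8 * α ^ 2 / ((1 - γ) ^ 2 * πbmin ^ 2) := by
      field_simp
      ring
    linarith
  -- T2 : the y part
  have hYb : (1 - γ) * Y ≤ ω * (2 * γ * M + χ + E) := by
    rw [hχ, hMdef, hEdef, hYdef]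
    exact ydiff_bound hp hR ⟨hγ0, hγ1⟩ hπ hπt hω hπ' hQstar hQpi hQpi'
  have hY2 : Y ^ 2 ≤ (ω * (2 * γ * M + χ + E)) ^ 2 / (1 - γ) ^ 2 :=
    ysq_bound hg hY0 hYb
  have hγ2 : γ ^ 2 ≤ 1 := by
    have h1 : γ * γ ≤ 1 * 1 := mul_le_mul hγ1.le hγ1.le hγ0.le zero_le_one
    calc γ ^ 2 = γ * γ := sq γ
      _ ≤ 1 := by linarith
  have hcY : (ω * (2 * γ * M + χ + E)) ^ 2
      ≤ ω ^ 2 * (24 * W / νmin + 3 * χ ^ 2 + 3 * E ^ 2) := by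
    have h3s := three_sq_le (2 * γ * M) χ E
    have e1 : (2 * γ * M) ^ 2 = 4 * (γ ^ 2 * M ^ 2) := by ring
    have e2 : γ ^ 2 * M ^ 2 ≤ M ^ 2 := mul_le_of_le_one_left (sq_nonneg M) hγ2
    have e3 : (2 * γ * M) ^ 2 ≤ 4 * (2 * W / νmin) := by
      have := hM2; linarith
    have hconv : 24 * W / νmin = 12 * (2 * W / νmin) := by ring
    have h5 : (2 * γ * M + χ + E) ^ 2 ≤ 24 * W / νmin + 3 * χ ^ 2 + 3 * E ^ 2 := by
      linarith [h3s, e3, hconv]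
    calc (ω * (2 * γ * M + χ + E)) ^ 2 = ω ^ 2 * (2 * γ * M + χ + E) ^ 2 := by ring
      _ ≤ ω ^ 2 * (24 * W / νmin + 3 * χ ^ 2 + 3 * E ^ 2) :=
        mul_le_mul_of_nonneg_left h5 (sq_nonneg ω)
  have hg2 : (0:ℝ) < (1 - γ) ^ 2 := by positivity
  have hYfin : Y ^ 2 ≤ 24 * ω ^ 2 / ((1 - γ) ^ 2 * νmin) * W
      + 3 * ω ^ 2 / (1 - γ) ^ 2 * E ^ 2 + 3 * ω ^ 2 / (1 - γ) ^ 2 * χ ^ 2 := by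
    have h1 : (ω * (2 * γ * M + χ + E)) ^ 2 / (1 - γ) ^ 2
        ≤ ω ^ 2 * (24 * W / νmin + 3 * χ ^ 2 + 3 * E ^ 2) / (1 - γ) ^ 2 :=
      (div_le_div_iff_of_pos_right hg2).mpr hcY
    have h2 : ω ^ 2 * (24 * W / νmin + 3 * χ ^ 2 + 3 * E ^ 2) / (1 - γ) ^ 2
        = 24 * ω ^ 2 / ((1 - γ) ^ 2 * νmin) * W
          + 3 * ω ^ 2 / (1 - γ) ^ 2 * E ^ 2 + 3 * ω ^ 2 / (1 - γ) ^ 2 * χ ^ 2 := by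
      field_simp
      ring
    linarith
  -- sum over ν of y² is at most Y²
  have hT2 : ∑ s, ∑ a, ν s a * (Qpi s a - Qpi' s a) ^ 2 ≤ Y ^ 2 := by
    have hpt2 : ∀ s a, ν s a * (Qpi s a - Qpi' s a) ^ 2 ≤ ν s a * Y ^ 2 := by
      intro s a
      apply mul_le_mul_of_nonneg_left _ (hνn s a)
      have h1 : |Qpi s a - Qpi' s a| ≤ Y :=
        hYdef ▸ abs_le_supNorm (fun s a => Qpi s a - Qpi' s a) s a
      calc (Qpi s a - Qpi' s a) ^ 2 = |Qpi s a - Qpi' s a| ^ 2 := (sq_abs _).symm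
        _ ≤ Y ^ 2 := by
          apply pow_le_pow_left₀ (abs_nonneg _) h1
    calc ∑ s, ∑ a, ν s a * (Qpi s a - Qpi' s a) ^ 2
        ≤ ∑ s, ∑ a, ν s a * Y ^ 2 :=
          Finset.sum_le_sum fun s _ => Finset.sum_le_sum fun a _ => hpt2 s a
      _ = Y ^ 2 := by
        simp only [← Finset.sum_mul]
        rw [hνsum, one_mul]
  -- final assembly
  rw [nuNorm_sq hνn]
  have hsplit : ∑ s, ∑ a, ν s a * (Q' s a - Q s a + (Qpi s a - Qpi' s a)) ^ 2
      ≤ 2 * (∑ s, ∑ a, ν s a * (Q' s a - Q s a) ^ 2)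
        + 2 * (∑ s, ∑ a, ν s a * (Qpi s a - Qpi' s a) ^ 2) := by
    have hptw : ∀ s a, ν s a * (Q' s a - Q s a + (Qpi s a - Qpi' s a)) ^ 2
        ≤ 2 * (ν s a * (Q' s a - Q s a) ^ 2) + 2 * (ν s a * (Qpi s a - Qpi' s a) ^ 2) := by
      intro s a
      have h := add_sq_le_two (Q' s a - Q s a) (Qpi s a - Qpi' s a)
      have h2 := mul_le_mul_of_nonneg_left h (hνn s a)
      linarith [h2]
    calc ∑ s, ∑ a, ν s a * (Q' s a - Q s a + (Qpi s a - Qpi' s a)) ^ 2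
        ≤ ∑ s, ∑ a, (2 * (ν s a * (Q' s a - Q s a) ^ 2)
            + 2 * (ν s a * (Qpi s a - Qpi' s a) ^ 2)) :=
          Finset.sum_le_sum fun s _ => Finset.sum_le_sum fun a _ => hptw s a
      _ = 2 * (∑ s, ∑ a, ν s a * (Q' s a - Q s a) ^ 2)
            + 2 * (∑ s, ∑ a, ν s a * (Qpi s a - Qpi' s a) ^ 2) := by
          simp only [Finset.sum_add_distrib, Finset.mul_sum]
  have hRHSeq : (9 * α ^ 2 / (πbmin ^ 2 * νmin) + 24 * ω ^ 2 / ((1 - γ) ^ 2 * νmin)) * W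
        + 3 * ω ^ 2 / (1 - γ) ^ 2 * E ^ 2
        + 3 * ω ^ 2 / (1 - γ) ^ 2 * χ ^ 2
        + 8 * α ^ 2 / ((1 - γ) ^ 2 * πbmin ^ 2)
      = (9 * α ^ 2 / (πbmin ^ 2 * νmin) * W + 8 * α ^ 2 / ((1 - γ) ^ 2 * πbmin ^ 2))
        + (24 * ω ^ 2 / ((1 - γ) ^ 2 * νmin) * W
          + 3 * ω ^ 2 / (1 - γ) ^ 2 * E ^ 2 + 3 * ω ^ 2 / (1 - γ) ^ 2 * χ ^ 2) := by
    ring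
  rw [hT1sum] at hsplit
  linarith [hT1, hT2, hYfin, hsplit]
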